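/- arXiv:2503.18863 — 4 statements merged into one kernel-verified Lean document; each statement's English description precedes it below -/
import Mathlib

section
/- For x > 0 and σ ∈ [0,1], one has x^(1-σ) ≤ Γ(x+1)/Γ(x+σ) ≤ (x+1)^(1-σ). -/
open Real

theorem gautschi_inequality (x σ : ℝ) (hx : 0 < x) (hσ : σ ∈ Set.Icc (0:ℝ) 1) :
    x ^ (1 - σ) ≤ Gamma (x + 1) / Gamma (x + σ) ∧
    Gamma (x + 1) / Gamma (x + σ) ≤ (x + 1) ^ (1 - σ) := by
  obtain ⟨hσ0, hσ1⟩ := hσ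
  have hGx : 0 < Gamma x := Gamma_pos_of_pos hx
  have hGxσ : 0 < Gamma (x + σ) := Gamma_pos_of_pos (by linarith)
  have hGx1 : 0 < Gamma (x + 1) := Gamma_pos_of_pos (by linarith)
  have hx1 : Gamma (x + 1) = x * Gamma x := Gamma_add_one hx.ne'
  rcases eq_or_lt_of_le hσ0 with h0 | h0
  · subst h0
    rw [add_zero, sub_zero, hx1, mul_div_assoc, div_self hGx.ne', mul_one,
      rpow_one, rpow_one]
    constructor <;> linarith
  rcases eq_or_lt_of_le hσ1 with h1 | h1
  · subst h1
    rw [sub_self, div_self hGx1.ne', rpow_zero, rpow_zero]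
    exact ⟨le_refl 1, le_refl 1⟩
  -- main case 0 < σ < 1
  have key1 : Gamma (x + σ) ≤ Gamma (x + 1) ^ σ * Gamma x ^ (1 - σ) := by
    have h := Gamma_mul_add_mul_le_rpow_Gamma_mul_rpow_Gamma
      (s := x + 1) (t := x) (a := σ) (b := 1 - σ)
      (by linarith) hx h0 (by linarith) (by ring)
    rwa [show σ * (x + 1) + (1 - σ) * x = x + σ by ring] at h
  have key2 : Gamma (x + 1) ≤ Gamma (x + σ) ^ σ * Gamma (x + σ + 1) ^ (1 - σ) := by
    have h := Gamma_mul_add_mul_le_rpow_Gamma_mul_rpow_Gamma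
      (s := x + σ) (t := x + σ + 1) (a := σ) (b := 1 - σ)
      (by linarith) (by linarith) h0 (by linarith) (by ring)
    rwa [show σ * (x + σ) + (1 - σ) * (x + σ + 1) = x + 1 by ring] at h
  have hxσ1 : Gamma (x + σ + 1) = (x + σ) * Gamma (x + σ) :=
    Gamma_add_one (by positivity)
  constructor
  · rw [le_div_iff₀ hGxσ]
    calc x ^ (1 - σ) * Gamma (x + σ)
        ≤ x ^ (1 - σ) * (Gamma (x + 1) ^ σ * Gamma x ^ (1 - σ)) := by
          exact mul_le_mul_of_nonneg_left key1 (rpow_nonneg hx.le _)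
      _ = Gamma (x + 1) ^ σ * (x * Gamma x) ^ (1 - σ) := by
          rw [mul_rpow hx.le hGx.le]; ring
      _ = Gamma (x + 1) ^ σ * Gamma (x + 1) ^ (1 - σ) := by rw [← hx1]
      _ = Gamma (x + 1) := by rw [← rpow_add hGx1]; simp
  · rw [div_le_iff₀ hGxσ]
    calc Gamma (x + 1)
        ≤ Gamma (x + σ) ^ σ * Gamma (x + σ + 1) ^ (1 - σ) := key2
      _ = Gamma (x + σ) ^ σ * ((x + σ) * Gamma (x + σ)) ^ (1 - σ) := by rw [hxσ1]
      _ = (x + σ) ^ (1 - σ) * Gamma (x + σ) := by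
          rw [mul_rpow (by positivity) hGxσ.le, ← mul_assoc,
            mul_comm (Gamma (x + σ) ^ σ), mul_assoc, ← rpow_add hGxσ]
          simp
      _ ≤ (x + 1) ^ (1 - σ) * Gamma (x + σ) := by
          gcongr
end

section
/- Let α ∈ (0,1), γ > -α, and define c_n = ∏_{j=0}^{n-1} Γ(j(γ+α)+γ+1)/Γ((j+1)(γ+α)+1) for n ≥ 1. Then lim_{l→∞} ((l+2)c_{l+2})/((l+1)c_{l+1}) = 0, and hence for every η ∈ ℝ and x > 0 the series ∑_{l=0}^∞ (l+1)(-η)^l x^{l(α+γ)} c_{l+1} converges absolutely. -/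
open Real Filter Finset

/-- Log-convexity of Gamma gives `Γ(s+1) ≤ Γ(s+α) * (s+α)^(1-α)` for `0 < s`, `0 < α < 1`. -/
lemma ks_aux_gamma_ineq (α s : ℝ) (h0 : 0 < α) (h1 : α < 1) (hs : 0 < s) :
    Gamma s * s ≤ Gamma (s + α) * (s + α) ^ (1 - α) := by
  have hsα : 0 < s + α := by linarith
  have hsα1 : 0 < s + α + 1 := by linarith
  have hconv := Real.convexOn_log_Gamma.2 (Set.mem_Ioi.mpr hsα) (Set.mem_Ioi.mpr hsα1)
    h0.le (by linarith : (0:ℝ) ≤ 1 - α) (by ring)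
  have harg : α • (s + α) + (1 - α) • (s + α + 1) = s + 1 := by
    simp only [smul_eq_mul]; ring
  rw [harg] at hconv
  simp only [Function.comp_apply, smul_eq_mul] at hconv
  have hG1 : Gamma (s + 1) = s * Gamma s := Real.Gamma_add_one hs.ne'
  have hG2 : Gamma (s + α + 1) = (s + α) * Gamma (s + α) := Real.Gamma_add_one hsα.ne'
  have hGs : 0 < Gamma s := Real.Gamma_pos_of_pos hs
  have hGsα : 0 < Gamma (s + α) := Real.Gamma_pos_of_pos hsα
  have hRHS : α * log (Gamma (s + α)) + (1 - α) * log (Gamma (s + α + 1))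
      = log (Gamma (s + α) * (s + α) ^ (1 - α)) := by
    rw [hG2, Real.log_mul hsα.ne' hGsα.ne', Real.log_mul hGsα.ne'
      (Real.rpow_pos_of_pos hsα _).ne', Real.log_rpow hsα]
    ring
  rw [hRHS] at hconv
  have := Real.exp_le_exp.mpr hconv
  rwa [Real.exp_log (by rw [hG1]; positivity),
    Real.exp_log (by positivity), hG1, mul_comm s] at this

theorem ks_coeff_ratio_tendsto_zero_and_summable
    (α γ : ℝ) (hα : α ∈ Set.Ioo (0:ℝ) 1) (hγ : -α < γ)
    (c : ℕ → ℝ)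
    (hc : ∀ n, c n = ∏ j ∈ Finset.range n,
      Gamma (j * (γ + α) + γ + 1) / Gamma ((j + 1) * (γ + α) + 1)) :
    Tendsto (fun l : ℕ =>
        ((l : ℝ) + 2) * c (l + 2) / (((l : ℝ) + 1) * c (l + 1))) atTop (nhds 0) ∧
    ∀ (η x : ℝ), 0 < x →
      Summable (fun l : ℕ => |((l : ℝ) + 1) * (-η) ^ l * x ^ ((l : ℝ) * (α + γ)) * c (l + 1)|) := by
  obtain ⟨hα0, hα1⟩ := hα
  have hd : 0 < γ + α := by linarith
  have hγ1 : 0 < γ + 1 := by linarith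
  have hcpos : ∀ n, 0 < c n := by
    intro n
    rw [hc n]
    apply Finset.prod_pos
    intro j _
    have hj : (0:ℝ) ≤ (j:ℝ) := j.cast_nonneg
    have h1 : 0 < (j:ℝ) * (γ + α) + γ + 1 := by nlinarith
    have h2 : 0 < ((j:ℝ) + 1) * (γ + α) + 1 := by nlinarith
    exact div_pos (Real.Gamma_pos_of_pos h1) (Real.Gamma_pos_of_pos h2)
  set s : ℕ → ℝ := fun l => ((l:ℝ) + 1) * (γ + α) + γ + 1 with hs_def
  have hspos : ∀ l, 0 < s l := by
    intro l
    have hj : (0:ℝ) ≤ (l:ℝ) := l.cast_nonneg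
    simp only [hs_def]
    nlinarith
  have e1 : ∀ l : ℕ, ((l + 1 : ℕ):ℝ) * (γ + α) + γ + 1 = s l := by
    intro l; simp only [hs_def]; push_cast; ring
  have e2 : ∀ l : ℕ, (((l + 1 : ℕ):ℝ) + 1) * (γ + α) + 1 = s l + α := by
    intro l; simp only [hs_def]; push_cast; ring
  have hkey : ∀ l : ℕ, ((l:ℝ) + 2) * c (l + 2) / (((l:ℝ) + 1) * c (l + 1))
      = (((l:ℝ) + 2) / ((l:ℝ) + 1)) * (Gamma (s l) / Gamma (s l + α)) := by
    intro l
    rw [hc (l + 2), Finset.prod_range_succ, ← hc (l + 1), e1 l, e2 l]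
    have hne : c (l + 1) ≠ 0 := (hcpos (l + 1)).ne'
    have hlp : ((l:ℝ) + 1) ≠ 0 := by positivity
    have halg : ∀ a b C q : ℝ, C ≠ 0 → b ≠ 0 → a * (C * q) / (b * C) = a / b * q := by
      intros a b C q hC hb
      field_simp
    exact halg _ _ _ _ hne hlp
  have hbound : ∀ l : ℕ, (((l:ℝ) + 2) / ((l:ℝ) + 1)) * (Gamma (s l) / Gamma (s l + α))
      ≤ 2 * ((s l + α) ^ (1 - α) / s l) := by
    intro l
    have hsl := hspos l
    have hslα : 0 < s l + α := by linarith
    have hq : Gamma (s l) / Gamma (s l + α) ≤ (s l + α) ^ (1 - α) / s l := by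
      rw [div_le_div_iff₀ (Real.Gamma_pos_of_pos hslα) hsl]
      calc Gamma (s l) * s l ≤ Gamma (s l + α) * (s l + α) ^ (1 - α) :=
            ks_aux_gamma_ineq α (s l) hα0 hα1 hsl
        _ = (s l + α) ^ (1 - α) * Gamma (s l + α) := mul_comm _ _
    have h2 : ((l:ℝ) + 2) / ((l:ℝ) + 1) ≤ 2 := by
      rw [div_le_iff₀ (by positivity)]
      have : (0:ℝ) ≤ (l:ℝ) := Nat.cast_nonneg l
      nlinarith
    exact mul_le_mul h2 hq
      (div_nonneg (Real.Gamma_pos_of_pos hsl).le (Real.Gamma_pos_of_pos hslα).le)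
      (by norm_num)
  have hg : Tendsto (fun t : ℝ => (t + α) ^ (1 - α) / t) atTop (nhds 0) := by
    have h1 : Tendsto (fun t : ℝ => (t + α) ^ (-α)) atTop (nhds 0) :=
      (tendsto_rpow_neg_atTop hα0).comp (tendsto_atTop_add_const_right atTop α tendsto_id)
    have h2 : Tendsto (fun t : ℝ => (t + α) / t) atTop (nhds 1) := by
      have hz : Tendsto (fun t : ℝ => α / t) atTop (nhds 0) :=
        tendsto_const_nhds.div_atTop tendsto_id
      have ha : Tendsto (fun t : ℝ => 1 + α / t) atTop (nhds 1) := by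
        simpa using tendsto_const_nhds.add hz
      apply ha.congr'
      filter_upwards [eventually_gt_atTop (0:ℝ)] with t ht
      field_simp
    have hmul := h1.mul h2
    rw [zero_mul] at hmul
    apply hmul.congr'
    filter_upwards [eventually_gt_atTop (0:ℝ)] with t ht
    have htα : 0 < t + α := by linarith
    rw [show (1:ℝ) - α = -α + 1 by ring, Real.rpow_add htα, Real.rpow_one]
    ring
  have hstend : Tendsto s atTop atTop := by
    simp only [hs_def]
    apply tendsto_atTop_add_const_right
    apply tendsto_atTop_add_const_right
    apply Tendsto.atTop_mul_const hd
    exact tendsto_atTop_add_const_right _ _ tendsto_natCast_atTop_atTop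
  have hmain : Tendsto (fun l : ℕ =>
      ((l : ℝ) + 2) * c (l + 2) / (((l : ℝ) + 1) * c (l + 1))) atTop (nhds 0) := by
    have htop : Tendsto (fun l : ℕ => 2 * ((s l + α) ^ (1 - α) / s l)) atTop (nhds 0) := by
      have := hg.comp hstend
      simpa using this.const_mul 2
    apply tendsto_of_tendsto_of_tendsto_of_le_of_le (g := fun _ : ℕ => (0:ℝ))
      tendsto_const_nhds htop
    · intro l
      show (0:ℝ) ≤ ((l : ℝ) + 2) * c (l + 2) / (((l : ℝ) + 1) * c (l + 1))
      apply div_nonneg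
      · exact mul_nonneg (by positivity) (hcpos _).le
      · exact mul_nonneg (by positivity) (hcpos _).le
    · intro l
      show ((l : ℝ) + 2) * c (l + 2) / (((l : ℝ) + 1) * c (l + 1)) ≤ _
      rw [hkey l]
      exact hbound l
  refine ⟨hmain, fun η x hx => ?_⟩
  set K := |η| * x ^ (α + γ) with hK
  have hK0 : 0 ≤ K := by positivity
  have hev : ∀ᶠ l : ℕ in atTop,
      ((l : ℝ) + 2) * c (l + 2) / (((l : ℝ) + 1) * c (l + 1)) < 1 / (2 * (K + 1)) :=
    hmain.eventually_lt_const (by positivity)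
  have habs : ∀ m : ℕ, |((m:ℝ) + 1) * (-η) ^ m * x ^ ((m:ℝ) * (α + γ)) * c (m + 1)|
      = ((m:ℝ) + 1) * |η| ^ m * x ^ ((m:ℝ) * (α + γ)) * c (m + 1) := by
    intro m
    rw [abs_mul, abs_mul, abs_mul, abs_pow, abs_neg,
      abs_of_nonneg (by positivity : (0:ℝ) ≤ (m:ℝ) + 1),
      abs_of_pos (Real.rpow_pos_of_pos hx _), abs_of_pos (hcpos _)]
  apply summable_of_ratio_norm_eventually_le (r := 1/2) (by norm_num)
  filter_upwards [hev] with l hl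
  simp only [Real.norm_eq_abs, abs_abs]
  rw [habs (l + 1), habs l]
  rw [show l + 1 + 1 = l + 2 from rfl]
  push_cast
  have hxsplit : x ^ (((l:ℝ) + 1) * (α + γ)) = x ^ (α + γ) * x ^ ((l:ℝ) * (α + γ)) := by
    rw [show ((l:ℝ) + 1) * (α + γ) = (α + γ) + (l:ℝ) * (α + γ) by ring, Real.rpow_add hx]
  rw [hxsplit]
  have hden : 0 < ((l:ℝ) + 1) * c (l + 1) := mul_pos (by positivity) (hcpos _)
  rw [div_lt_iff₀ hden] at hl
  have hM : (0:ℝ) ≤ |η| ^ l * x ^ ((l:ℝ) * (α + γ)) := by positivity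
  have hKle : 1 / (2 * (K + 1)) * K ≤ 1 / 2 := by
    rw [div_mul_eq_mul_div, div_le_div_iff₀ (by positivity) (by norm_num)]
    nlinarith
  calc ((l:ℝ) + 1 + 1) * |η| ^ (l + 1) * (x ^ (α + γ) * x ^ ((l:ℝ) * (α + γ))) * c (l + 2)
      = (((l:ℝ) + 2) * c (l + 2)) * K * (|η| ^ l * x ^ ((l:ℝ) * (α + γ))) := by
        rw [hK]; ring
    _ ≤ (1 / (2 * (K + 1)) * (((l:ℝ) + 1) * c (l + 1))) * K
          * (|η| ^ l * x ^ ((l:ℝ) * (α + γ))) :=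
        mul_le_mul_of_nonneg_right (mul_le_mul_of_nonneg_right hl.le hK0) hM
    _ = (1 / (2 * (K + 1)) * K) * ((((l:ℝ) + 1) * c (l + 1)) * (|η| ^ l * x ^ ((l:ℝ) * (α + γ)))) := by
        ring
    _ ≤ (1 / 2) * ((((l:ℝ) + 1) * c (l + 1)) * (|η| ^ l * x ^ ((l:ℝ) * (α + γ)))) :=
        mul_le_mul_of_nonneg_right hKle (mul_nonneg hden.le hM)
    _ = 1 / 2 * (((l:ℝ) + 1) * |η| ^ l * x ^ ((l:ℝ) * (α + γ)) * c (l + 1)) := by ring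
end

section
/- Let α ∈ (0,1), γ > -α, and c_j = ∏_{k=0}^{j-1} Γ(k(γ+α)+γ+1)/Γ((k+1)(γ+α)+1). Then lim_{l→∞} |l·c_l / ((l-1)·c_{l-1})| = 0, so the series ∑_{j=1}^∞ c_j · j · (-λ t^{α+γ})^j converges absolutely for all λ > 0 and t ≥ 0. -/
/-!
Each factor of `c` has the form `Γ(x - α) / Γ x` with `x = (k + 1)(γ + α) + 1`. Log-convexity
of `Γ` between `x - 1` and `x`, together with `Γ x = (x - 1) Γ (x - 1)`, bounds it by
`(x - 1) ^ (-α)`. Hence `c (l + 1) / c l → 0`, the extra factor `(l + 1) / l` tends to `1`, and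
the ratio test gives absolute convergence of `∑ c j * j * z ^ j` for every `z`.
-/

open Real Filter Finset Topology

theorem summable_norm_mul_pow_of_tendsto_norm_div {𝕜 : Type*} [NormedDivisionRing 𝕜]
    {a : ℕ → 𝕜} (ha : ∀ᶠ n in atTop, a n ≠ 0)
    (h : Tendsto (fun n => ‖a (n + 1) / a n‖) atTop (𝓝 0)) (z : 𝕜) :
    Summable fun n => ‖a n * z ^ n‖ := by
  refine summable_of_ratio_norm_eventually_le (r := 1 / 2) (by norm_num) ?_
  have hsmall : ∀ᶠ n in atTop, ‖a (n + 1) / a n‖ * ‖z‖ ≤ 1 / 2 := by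
    have h' := h.mul_const ‖z‖
    rw [zero_mul] at h'
    exact h'.eventually_le_const (by norm_num)
  filter_upwards [ha, hsmall] with n hn hsmall
  have hsplit :
      ‖a (n + 1) * z ^ (n + 1)‖ = ‖a (n + 1) / a n‖ * ‖z‖ * ‖a n * z ^ n‖ := by
    rw [norm_div, norm_mul, norm_mul, norm_pow, norm_pow, pow_succ]
    field_simp [norm_ne_zero_iff.mpr hn]
  rw [norm_norm, norm_norm, hsplit]
  exact mul_le_mul_of_nonneg_right hsmall (norm_nonneg (a n * z ^ n))

namespace Real

theorem Gamma_sub_div_Gamma_le_rpow {α x : ℝ} (hα₀ : 0 < α) (hα₁ : α < 1) (hx : 1 < x) :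
    Gamma (x - α) / Gamma x ≤ (x - 1) ^ (-α) := by
  have hx₁ : 0 < x - 1 := by linarith
  have hΓ : 0 < Gamma x := Gamma_pos_of_pos (by linarith)
  have hΓ_sub_one : Gamma (x - 1) = Gamma x / (x - 1) := by
    rw [eq_div_iff hx₁.ne', mul_comm, ← Gamma_add_one hx₁.ne', sub_add_cancel]
  have hconv := Gamma_mul_add_mul_le_rpow_Gamma_mul_rpow_Gamma hx₁ (by linarith : 0 < x) hα₀
    (sub_pos.mpr hα₁) (add_sub_cancel α 1)
  rw [show α * (x - 1) + (1 - α) * x = x - α by ring, hΓ_sub_one,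
    div_rpow hΓ.le hx₁.le, div_mul_eq_mul_div, ← rpow_add hΓ, add_sub_cancel, rpow_one,
    div_eq_mul_inv, ← rpow_neg hx₁.le] at hconv
  rwa [div_le_iff₀ hΓ, mul_comm]

theorem tendsto_Gamma_sub_div_Gamma_atTop {α : ℝ} (hα₀ : 0 < α) (hα₁ : α < 1) :
    Tendsto (fun x => Gamma (x - α) / Gamma x) atTop (𝓝 0) := by
  have hbound : Tendsto (fun x : ℝ => (x - 1) ^ (-α)) atTop (𝓝 0) :=
    (tendsto_rpow_neg_atTop hα₀).comp (tendsto_atTop_add_const_right _ (-1) tendsto_id)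
  refine tendsto_of_tendsto_of_tendsto_of_le_of_le' tendsto_const_nhds hbound ?_ ?_
  · filter_upwards [eventually_gt_atTop 1] with x hx
    exact div_nonneg (Gamma_pos_of_pos (by linarith)).le (Gamma_pos_of_pos (by linarith)).le
  · filter_upwards [eventually_gt_atTop 1] with x hx
    exact Gamma_sub_div_Gamma_le_rpow hα₀ hα₁ hx

end Real

theorem tendsto_mul_natCast_ratio_of_tendsto_ratio {c q : ℕ → ℝ} (hc : ∀ n, c n ≠ 0)
    (hsucc : ∀ n, c (n + 1) = c n * q n) (hq : Tendsto q atTop (𝓝 0)) :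
    Tendsto (fun n => c (n + 1) * (n + 1 : ℕ) / (c n * n)) atTop (𝓝 0) := by
  have hfrac : Tendsto (fun n : ℕ => ((n : ℝ) + 1) / n) atTop (𝓝 1) := by
    simpa using (tendsto_natCast_div_add_atTop (1 : ℝ)).inv₀ one_ne_zero
  have hprod : Tendsto (fun n => q n * (((n : ℝ) + 1) / n)) atTop (𝓝 0) := by
    simpa using hq.mul hfrac
  refine hprod.congr' ?_
  filter_upwards [eventually_ne_atTop 0] with n hn
  rw [hsucc]
  push_cast
  field_simp [hc n]

theorem second_order_series_abs_convergence
    (α γ : ℝ) (hα : α ∈ Set.Ioo (0:ℝ) 1) (hγ : -α < γ)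
    (c : ℕ → ℝ)
    (hc : ∀ j, c j = ∏ k ∈ Finset.range j,
      Gamma (k * (γ + α) + γ + 1) / Gamma ((k + 1) * (γ + α) + 1)) :
    Tendsto (fun l : ℕ =>
        |(l : ℝ) * c l / (((l : ℝ) - 1) * c (l - 1))|) atTop (nhds 0) ∧
    ∀ (lam t : ℝ), 0 < lam → 0 ≤ t →
      Summable (fun j : ℕ => |c j * j * (-(lam * t ^ (α + γ))) ^ j|) := by
  obtain ⟨hα₀, hα₁⟩ := hα
  have hβ : 0 < γ + α := by linarith
  have hc_pos : ∀ j, 0 < c j := fun j => by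
    rw [hc j]
    refine prod_pos fun k _ => div_pos (Gamma_pos_of_pos ?_) (Gamma_pos_of_pos (by positivity))
    have : 0 ≤ (k : ℝ) * (γ + α) := by positivity
    linarith
  have hc_succ : ∀ n, c (n + 1) = c n *
      (Gamma (((n : ℝ) + 1) * (γ + α) + 1 - α) / Gamma (((n : ℝ) + 1) * (γ + α) + 1)) :=
    fun n => by
      rw [hc, hc, prod_range_succ,
        show (n : ℝ) * (γ + α) + γ + 1 = (n + 1) * (γ + α) + 1 - α by ring]
  have hq : Tendsto (fun n : ℕ => Gamma (((n : ℝ) + 1) * (γ + α) + 1 - α) /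
      Gamma (((n : ℝ) + 1) * (γ + α) + 1)) atTop (𝓝 0) :=
    (tendsto_Gamma_sub_div_Gamma_atTop hα₀ hα₁).comp <| tendsto_atTop_add_const_right _ _ <|
      (tendsto_atTop_add_const_right _ _ tendsto_natCast_atTop_atTop).atTop_mul_const hβ
  have hratio := tendsto_mul_natCast_ratio_of_tendsto_ratio (fun n => (hc_pos n).ne') hc_succ hq
  refine ⟨?_, fun lam t _ _ => ?_⟩
  · rw [← tendsto_add_atTop_iff_nat 1]
    simpa only [Nat.cast_add, Nat.cast_one, mul_comm, add_sub_cancel_right, add_tsub_cancel_right,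
      abs_zero] using hratio.abs
  · have hc_mul_ne : ∀ᶠ n : ℕ in atTop, c n * n ≠ 0 := by
      filter_upwards [eventually_ne_atTop 0] with n hn
      exact mul_ne_zero (hc_pos n).ne' (Nat.cast_ne_zero.mpr hn)
    simpa only [Real.norm_eq_abs] using summable_norm_mul_pow_of_tendsto_norm_div hc_mul_ne
      (tendsto_zero_iff_norm_tendsto_zero.mp hratio) (-(lam * t ^ (α + γ)))
end

section
/- Let α ∈ (0,1) and γ > -1 with α + γ > 0. Define [n!]^{α+γ}_α = ∏_{k=1}^{n} Γ((α+γ)k+1)/Γ((α+γ)k-α+1). Then there exist N ∈ ℕ and a constant C > 0 (depending on α, γ) such that for all n > N, 1/[n!]^{α+γ}_α ≤ C · (2^{1-α}/(α+γ)^α)^n / ((n-1)!)^α. -/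
open Real Finset

lemma gautschi_lower (α y : ℝ) (hα : 0 < α) (hα1 : α < 1) (hy : 0 < y) :
    y ^ α ≤ Real.Gamma (y + 1) / Real.Gamma (y + 1 - α) := by
  have hy1 : (0:ℝ) < y + 1 := by linarith
  have hΓy : 0 < Real.Gamma y := Real.Gamma_pos_of_pos hy
  have hΓy1 : 0 < Real.Gamma (y + 1) := Real.Gamma_pos_of_pos hy1
  have hΓm : 0 < Real.Gamma (y + 1 - α) := Real.Gamma_pos_of_pos (by linarith)
  have hconv := Real.convexOn_log_Gamma.2 (Set.mem_Ioi.mpr hy1) (Set.mem_Ioi.mpr hy)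
      (by linarith : (0:ℝ) ≤ 1 - α) hα.le (by ring)
  have hcomb : (1 - α) • (y + 1) + α • y = y + 1 - α := by
    simp [smul_eq_mul]; ring
  rw [hcomb] at hconv
  simp only [Function.comp] at hconv
  -- exponentiate
  have h2 : Real.Gamma (y + 1 - α) ≤ Real.Gamma (y + 1) ^ (1 - α) * Real.Gamma y ^ α := by
    have e := Real.exp_le_exp.mpr hconv
    rw [Real.exp_log hΓm] at e
    refine e.trans_eq ?_
    rw [Real.exp_add, smul_eq_mul, smul_eq_mul, mul_comm (1-α), mul_comm α,
      Real.exp_mul, Real.exp_mul, Real.exp_log hΓy1, Real.exp_log hΓy]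
  have hratio : (Real.Gamma (y + 1) / Real.Gamma y) ^ α
      ≤ Real.Gamma (y + 1) / Real.Gamma (y + 1 - α) := by
    rw [Real.div_rpow hΓy1.le hΓy.le, div_le_div_iff₀ (Real.rpow_pos_of_pos hΓy α) hΓm]
    calc Real.Gamma (y + 1) ^ α * Real.Gamma (y + 1 - α)
        ≤ Real.Gamma (y + 1) ^ α * (Real.Gamma (y + 1) ^ (1 - α) * Real.Gamma y ^ α) := by
          exact mul_le_mul_of_nonneg_left h2 (Real.rpow_nonneg hΓy1.le α)
      _ = Real.Gamma (y + 1) * Real.Gamma y ^ α := by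
          rw [← mul_assoc, ← Real.rpow_add hΓy1]; norm_num
  have hq : Real.Gamma (y + 1) / Real.Gamma y = y := by
    rw [Real.Gamma_add_one (ne_of_gt hy)]
    field_simp
  rwa [hq] at hratio

theorem factorial_bracket_bound
    (α γ : ℝ) (hα : α ∈ Set.Ioo (0:ℝ) 1) (hγ : -1 < γ) (hαγ : 0 < α + γ) :
    ∃ (N : ℕ) (C : ℝ), 0 < C ∧ ∀ n : ℕ, N < n →
      1 / (∏ k ∈ Finset.Icc 1 n,
            Gamma ((α + γ) * k + 1) / Gamma ((α + γ) * k - α + 1)) ≤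
        C * (2 ^ (1 - α) / (α + γ) ^ α) ^ n / ((Nat.factorial (n - 1) : ℝ)) ^ α := by
  obtain ⟨hα0, hα1⟩ := hα
  refine ⟨0, 1, one_pos, fun n hn => ?_⟩
  -- lower bound each factor
  have key : ∀ k ∈ Finset.Icc 1 n, ((α + γ) * k) ^ α
      ≤ Gamma ((α + γ) * k + 1) / Gamma ((α + γ) * k - α + 1) := by
    intro k hk
    have hk1 : 1 ≤ k := (Finset.mem_Icc.mp hk).1
    have hyk : 0 < (α + γ) * k := by
      have : (1:ℝ) ≤ k := by exact_mod_cast hk1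
      positivity
    have := gautschi_lower α ((α + γ) * k) hα0 hα1 hyk
    convert this using 3
    ring
  have hpos : ∀ k ∈ Finset.Icc 1 n, (0:ℝ) ≤ ((α + γ) * k) ^ α := by
    intro k _; positivity
  have hprod : ∏ k ∈ Finset.Icc 1 n, ((α + γ) * k) ^ α
      ≤ ∏ k ∈ Finset.Icc 1 n, Gamma ((α + γ) * k + 1) / Gamma ((α + γ) * k - α + 1) :=
    Finset.prod_le_prod hpos key
  -- compute the lower product
  have hlow : ∏ k ∈ Finset.Icc 1 n, ((α + γ) * k) ^ α
      = ((α + γ) ^ α) ^ n * ((n.factorial : ℝ)) ^ α := by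
    have h1 : ∏ k ∈ Finset.Icc 1 n, ((α + γ) * (k:ℝ)) ^ α
        = (∏ k ∈ Finset.Icc 1 n, (α + γ) * (k:ℝ)) ^ α := by
      rw [← Real.finset_prod_rpow _ _ (fun k hk => by
        have hk1 : 1 ≤ k := (Finset.mem_Icc.mp hk).1
        have : (1:ℝ) ≤ k := by exact_mod_cast hk1
        positivity)]
    have h2 : ∏ k ∈ Finset.Icc 1 n, ((α + γ) * (k:ℝ))
        = (α + γ) ^ n * (n.factorial : ℝ) := by
      have hc : ∏ k ∈ Finset.Icc 1 n, (k:ℝ) = (n.factorial : ℝ) := by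
        rw [← Nat.cast_prod]
        congr 1
        rw [← Finset.Ico_add_one_right_eq_Icc]
        exact Finset.prod_Ico_id_eq_factorial n
      rw [Finset.prod_mul_distrib, Finset.prod_const, hc, Nat.card_Icc, Nat.add_sub_cancel]
    rw [h1, h2, Real.mul_rpow (by positivity) (by positivity),
      ← Real.rpow_natCast (α + γ) n, ← Real.rpow_mul hαγ.le, mul_comm (n:ℝ) α,
      Real.rpow_mul hαγ.le, Real.rpow_natCast]
  have hfacpos : (0:ℝ) < (n.factorial : ℝ) := by exact_mod_cast n.factorial_pos
  have hlpos : 0 < ((α + γ) ^ α) ^ n * ((n.factorial : ℝ)) ^ α := by positivity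
  rw [hlow] at hprod
  have step1 : 1 / (∏ k ∈ Finset.Icc 1 n,
      Gamma ((α + γ) * k + 1) / Gamma ((α + γ) * k - α + 1))
      ≤ 1 / (((α + γ) ^ α) ^ n * ((n.factorial : ℝ)) ^ α) :=
    one_div_le_one_div_of_le hlpos hprod
  refine step1.trans ?_
  -- now pure algebra
  have hn1 : 1 ≤ n := hn
  have hfacle : ((n - 1).factorial : ℝ) ^ α ≤ ((n.factorial : ℝ)) ^ α := by
    apply Real.rpow_le_rpow (by positivity) _ hα0.le
    exact_mod_cast Nat.factorial_le (Nat.sub_le n 1)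
  have hfm1pos : (0:ℝ) < ((n - 1).factorial : ℝ) := by exact_mod_cast (n-1).factorial_pos
  have h2pow : (1:ℝ) ≤ (2:ℝ) ^ (1 - α) := Real.one_le_rpow one_le_two (by linarith)
  have hagpow : (0:ℝ) < (α + γ) ^ α := Real.rpow_pos_of_pos hαγ α
  rw [one_mul, div_pow, div_div]
  rw [div_le_div_iff₀ hlpos (by positivity)]
  calc 1 * (((α + γ) ^ α) ^ n * (((n-1).factorial : ℝ)) ^ α)
      ≤ (2 ^ (1 - α)) ^ n * (((α + γ) ^ α) ^ n * ((n.factorial : ℝ)) ^ α) := by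
        rw [one_mul]
        have : ((α + γ) ^ α) ^ n * (((n-1).factorial : ℝ)) ^ α
            ≤ ((α + γ) ^ α) ^ n * ((n.factorial : ℝ)) ^ α :=
          mul_le_mul_of_nonneg_left hfacle (by positivity)
        refine this.trans ?_
        nth_rewrite 1 [← one_mul (((α + γ) ^ α) ^ n * ((n.factorial : ℝ)) ^ α)]
        apply mul_le_mul_of_nonneg_right (one_le_pow₀ h2pow) (by positivity)
end
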